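/- arXiv:2005.13929 — 3 statements merged into one kernel-verified Lean document; each statement's English description precedes it below -/
import Mathlib

section
/- Let G be a finite p-group such that γ₂(G) is elementary abelian of order p⁴. (a) If p ≥ 3 and the nilpotency class of G is at most 3, then x^p ∈ Z(G) for every x ∈ G. (b) If p ≥ 5, then x^p ∈ Z(G) for every x ∈ G (with no restriction on the nilpotency class). -/
open Polynomial
open scoped commutatorElement

private lemma auxGeomPoly {p : ℕ} (hp : p.Prime) :
    ∑ i ∈ Finset.range p, (X : Polynomial (ZMod p)) ^ i = (X - 1) ^ (p - 1) := by
  haveI := Fact.mk hp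
  haveI : CharP (Polynomial (ZMod p)) p := charP_of_injective_ringHom Polynomial.C_injective p
  have h1 : (X - 1 : Polynomial (ZMod p)) ≠ 0 := by
    have := Polynomial.X_sub_C_ne_zero (1 : ZMod p)
    simpa using this
  apply mul_right_cancel₀ h1
  rw [geom_sum_mul, ← pow_succ, Nat.sub_add_cancel hp.one_lt.le]
  have h4 : ((X : Polynomial (ZMod p)) - 1) ^ p = X ^ p - 1 ^ p := sub_pow_char X 1
  simpa using h4.symm

private lemma auxSumPow {p : ℕ} (hp : p.Prime) {A : Type*} [AddCommGroup A]
    [Module (ZMod p) A] (f : Module.End (ZMod p) A) {d : ℕ} (hd : d ≤ p - 1)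
    (h : (f - 1) ^ d = 0) : ∑ i ∈ Finset.range p, f ^ i = 0 := by
  have h2 : ∑ i ∈ Finset.range p, f ^ i = (f - 1) ^ (p - 1) := by
    have h3 := congrArg (aeval f) (auxGeomPoly hp)
    simpa [map_sum] using h3
  rw [h2, ← Nat.add_sub_cancel' hd, pow_add, h, zero_mul]

private lemma auxNil {p : ℕ} (hp : p.Prime) {A : Type*} [AddCommGroup A]
    [Module (ZMod p) A] [Finite A] (hcard : Nat.card A = p ^ 4)
    (g : Module.End (ZMod p) A) (hg : IsNilpotent g) : g ^ 4 = 0 := by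
  haveI := Fact.mk hp
  cases nonempty_fintype A
  have hfr : Module.finrank (ZMod p) A = 4 := by
    have h1 : Fintype.card A = Fintype.card (ZMod p) ^ Module.finrank (ZMod p) A :=
      Module.card_eq_pow_finrank
    rw [ZMod.card, ← Nat.card_eq_fintype_card, hcard] at h1
    exact (Nat.pow_right_injective hp.two_le h1.symm)
  have h2 := hg.charpoly_eq_X_pow_finrank
  have h3 := LinearMap.aeval_self_charpoly g
  rw [h2, hfr] at h3
  simpa using h3

theorem pow_p_mem_center_of_commutator_elementary_abelian
    {p : ℕ} (hp : p.Prime)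
    {G : Type*} [Group G] [Finite G] [Group.IsNilpotent G]
    (hG : IsPGroup p G)
    (habel : ∀ x ∈ commutator G, ∀ y ∈ commutator G, x * y = y * x)
    (hcard : Nat.card (commutator G) = p ^ 4)
    (hexp : ∀ x ∈ commutator G, x ^ p = 1) :
    ((3 ≤ p ∧ Group.nilpotencyClass G ≤ 3) → ∀ x : G, x ^ p ∈ Subgroup.center G) ∧
    (5 ≤ p → ∀ x : G, x ^ p ∈ Subgroup.center G) := by
  haveI := Fact.mk hp
  haveI : NeZero p := ⟨hp.ne_zero⟩
  letI : CommGroup ↥(commutator G) :=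
    { (inferInstance : Group ↥(commutator G)) with
      mul_comm := fun a b => Subtype.ext (habel a a.2 b b.2) }
  haveI : Module (ZMod p) (Additive ↥(commutator G)) := AddCommGroup.zmodModule (by
    intro a
    refine Additive.toMul.injective ?_
    show (Additive.toMul a) ^ p = 1
    refine Subtype.ext ?_
    rw [SubmonoidClass.coe_pow]
    exact hexp _ (Additive.toMul a).2)
  have conjmem : ∀ (x : G) (k : ↥(commutator G)), x * ↑k * x⁻¹ ∈ commutator G :=
    fun x k => Subgroup.Normal.conj_mem inferInstance _ k.2 x
  have hcomm : ∀ x g : G, ⁅x, g⁆ ∈ commutator G := fun x g => by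
    rw [commutator_def]
    exact Subgroup.commutator_mem_commutator (Subgroup.mem_top _) (Subgroup.mem_top _)
  let F : G → Module.End (ZMod p) (Additive ↥(commutator G)) := fun x =>
    AddMonoidHom.toZModLinearMap p
      { toFun := fun a => Additive.ofMul (⟨x * ↑(Additive.toMul a) * x⁻¹, conjmem x _⟩ :
          ↥(commutator G))
        map_zero' := by
          rw [ofMul_eq_zero]
          refine Subtype.ext ?_
          simp
        map_add' := by
          intro a b
          show Additive.ofMul _ = Additive.ofMul (_ * _)
          refine congrArg Additive.ofMul (Subtype.ext ?_)
          show x * (↑(Additive.toMul a) * ↑(Additive.toMul b)) * x⁻¹ =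
            (x * ↑(Additive.toMul a) * x⁻¹) * (x * ↑(Additive.toMul b) * x⁻¹)
          group }
  have Fapply : ∀ (x : G) (a : Additive ↥(commutator G)),
      F x a = Additive.ofMul (⟨x * ↑(Additive.toMul a) * x⁻¹, conjmem x _⟩ :
        ↥(commutator G)) := fun x a => rfl
  have Fsub : ∀ (x : G) (a : Additive ↥(commutator G)),
      (F x - 1) a = Additive.ofMul (⟨⁅x, (↑(Additive.toMul a) : G)⁆, hcomm x _⟩ :
        ↥(commutator G)) := by
    intro x a
    rw [LinearMap.sub_apply, Module.End.one_apply, Fapply]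
    show Additive.ofMul _ - Additive.ofMul (Additive.toMul a) = _
    rw [← ofMul_div]
    refine congrArg Additive.ofMul (Subtype.ext ?_)
    show x * ↑(Additive.toMul a) * x⁻¹ / ↑(Additive.toMul a) = ⁅x, (↑(Additive.toMul a) : G)⁆
    rw [commutatorElement_def, div_eq_mul_inv]
  have Fpow : ∀ (x : G) (n : ℕ) (a : Additive ↥(commutator G)),
      ((F x) ^ n) a = Additive.ofMul (⟨x ^ n * ↑(Additive.toMul a) * (x ^ n)⁻¹,
        conjmem _ _⟩ : ↥(commutator G)) := by
    intro x n
    induction n with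
    | zero =>
      intro a
      rw [pow_zero, Module.End.one_apply]
      refine Additive.toMul.injective (Subtype.ext ?_)
      simp
    | succ n ih =>
      intro a
      rw [pow_succ, Module.End.mul_apply, ih, Fapply]
      refine congrArg Additive.ofMul (Subtype.ext ?_)
      show x ^ n * (x * ↑(Additive.toMul a) * x⁻¹) * (x ^ n)⁻¹ =
        x ^ (n + 1) * ↑(Additive.toMul a) * (x ^ (n + 1))⁻¹
      rw [pow_succ']
      group
  have key : ∀ (x g : G) (n : ℕ), ⁅x ^ n, g⁆ =
      ((Additive.toMul (∑ i ∈ Finset.range n,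
        ((F x) ^ i) (Additive.ofMul (⟨⁅x, g⁆, hcomm x g⟩ : ↥(commutator G)))) :
          ↥(commutator G)) : G) := by
    intro x g n
    induction n with
    | zero => simp
    | succ n ih =>
      rw [Finset.sum_range_succ']
      have hsum : ∀ i : ℕ, ((F x) ^ (i + 1)) (Additive.ofMul
          (⟨⁅x, g⁆, hcomm x g⟩ : ↥(commutator G))) =
          F x (((F x) ^ i) (Additive.ofMul (⟨⁅x, g⁆, hcomm x g⟩ : ↥(commutator G)))) := by
        intro i
        rw [pow_succ', Module.End.mul_apply]
      simp only [hsum]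
      rw [← map_sum, Fapply, pow_zero, Module.End.one_apply, toMul_add, toMul_ofMul,
        toMul_ofMul, Subgroup.coe_mul, pow_succ']
      show ⁅x * x ^ n, g⁆ = (x * _ * x⁻¹) * _
      rw [← ih]
      simp only [commutatorElement_def]
      group
  have main : ∀ (x : G) (d : ℕ), d ≤ p - 1 → ((F x) - 1) ^ d = 0 →
      x ^ p ∈ Subgroup.center G := by
    intro x d hd hzero
    rw [Subgroup.mem_center_iff]
    intro g
    have hsum := auxSumPow hp (F x) hd hzero
    have h := key x g p
    have hz : (∑ i ∈ Finset.range p,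
        ((F x) ^ i) (Additive.ofMul (⟨⁅x, g⁆, hcomm x g⟩ : ↥(commutator G)))) = 0 := by
      rw [← LinearMap.sum_apply, hsum, LinearMap.zero_apply]
    rw [hz] at h
    simp only [toMul_zero, OneMemClass.coe_one] at h
    exact (commutatorElement_eq_one_iff_commute.mp h).eq.symm
  constructor
  · rintro ⟨hp3, hclass⟩ x
    refine main x 2 (by omega) ?_
    have hbot : Subgroup.lowerCentralSeries (⊤ : Subgroup G) 3 = ⊥ :=
      Subgroup.lowerCentralSeries_eq_bot_iff_nilpotencyClass_le.mpr hclass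
    have memstep : ∀ (y : G) (k : G) (m : ℕ), k ∈ Subgroup.lowerCentralSeries (⊤ : Subgroup G) m →
        ⁅y, k⁆ ∈ Subgroup.lowerCentralSeries (⊤ : Subgroup G) (m + 1) := by
      intro y k m hk
      have hls : Subgroup.lowerCentralSeries (⊤ : Subgroup G) (m + 1) = ⁅Subgroup.lowerCentralSeries (⊤ : Subgroup G) m, ⊤⁆ := rfl
      rw [hls, Subgroup.commutator_comm]
      exact Subgroup.commutator_mem_commutator (Subgroup.mem_top _) hk
    refine LinearMap.ext fun a => ?_
    rw [pow_two, Module.End.mul_apply, Fsub, Fsub]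
    have h1 : (↑(Additive.toMul a) : G) ∈ Subgroup.lowerCentralSeries (⊤ : Subgroup G) 1 := (Additive.toMul a).2
    have h2 := memstep x _ 1 h1
    have h3 := memstep x ⁅x, (↑(Additive.toMul a) : G)⁆ 2 h2
    rw [hbot, Subgroup.mem_bot] at h3
    rw [LinearMap.zero_apply, ofMul_eq_zero]
    refine Subtype.ext ?_
    show ⁅x, (↑(Additive.toMul (Additive.ofMul _)) : G)⁆ = (1 : G)
    rw [toMul_ofMul]
    exact h3
  · intro hp5 x
    refine main x 4 (by omega) ?_
    obtain ⟨k, hxk⟩ := hG x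
    have hFone : (F x) ^ (p ^ k) = 1 := by
      refine LinearMap.ext fun a => ?_
      rw [Fpow, hxk, Module.End.one_apply]
      refine Additive.toMul.injective (Subtype.ext ?_)
      simp
    have hnil : IsNilpotent ((F x) - 1) := by
      refine ⟨p ^ k, ?_⟩
      haveI : CharP (Polynomial (ZMod p)) p :=
        charP_of_injective_ringHom Polynomial.C_injective p
      have hpoly : ((X : Polynomial (ZMod p)) - 1) ^ (p ^ k) = X ^ (p ^ k) - 1 := by
        have h5 : ((X : Polynomial (ZMod p)) - 1) ^ p ^ k = X ^ p ^ k - 1 ^ p ^ k :=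
          sub_pow_char_pow X 1 k
        simpa using h5
      have := congrArg (aeval (F x)) hpoly
      simp only [map_sub, map_pow, map_one, aeval_X] at this
      rw [this, hFone, sub_self]
    have hcA : Nat.card (Additive ↥(commutator G)) = p ^ 4 := by
      rw [Nat.card_congr Additive.toMul]
      exact hcard
    exact auxNil hp hcA ((F x) - 1) hnil
end

section
/- Let G be a finite p-group of nilpotency class at least 4. Then Z(G) ∩ γ₂(G) is not a maximal subgroup of γ₂(G); that is, the intersection of the center with the commutator subgroup, viewed as a subgroup of γ₂(G), is not a coatom in the lattice of subgroups of γ₂(G). -/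
/-- A normal subgroup of prime order `p` in a finite `p`-group is central. -/
private lemma le_center_of_card_eq_prime {p : ℕ} (hp : p.Prime) {G : Type*} [Group G] [Finite G]
    (hG : IsPGroup p G) (N : Subgroup G) [N.Normal] (hN : Nat.card N = p) :
    N ≤ Subgroup.center G := by
  haveI : Fact p.Prime := ⟨hp⟩
  have hconj : IsPGroup p (ConjAct G) := hG.of_equiv ConjAct.toConjAct
  have hmod := hconj.card_modEq_card_fixedPoints (α := N)
  have h1 : (1 : N) ∈ MulAction.fixedPoints (ConjAct G) N := fun g => smul_one g
  haveI : Nonempty (MulAction.fixedPoints (ConjAct G) N) := ⟨⟨1, h1⟩⟩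
  have hpos : 0 < Nat.card (MulAction.fixedPoints (ConjAct G) N) := Nat.card_pos
  have hle : Nat.card (MulAction.fixedPoints (ConjAct G) N) ≤ Nat.card N :=
    Nat.card_le_card_of_injective _ Subtype.coe_injective
  have h0 : Nat.card N ≡ 0 [MOD p] := by
    rw [hN]; exact Nat.modEq_zero_iff_dvd.mpr dvd_rfl
  have hdvd : p ∣ Nat.card (MulAction.fixedPoints (ConjAct G) N) :=
    Nat.modEq_zero_iff_dvd.mp (hmod.symm.trans h0)
  have hcard : Nat.card (MulAction.fixedPoints (ConjAct G) N) = Nat.card N := by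
    rw [hN]; exact le_antisymm (hN ▸ hle) (Nat.le_of_dvd hpos hdvd)
  have hsurj : Function.Surjective
      (Subtype.val : MulAction.fixedPoints (ConjAct G) N → N) := by
    have := (Nat.bijective_iff_injective_and_card
      (Subtype.val : MulAction.fixedPoints (ConjAct G) N → N)).mpr
      ⟨Subtype.coe_injective, hcard⟩
    exact this.2
  intro n hn
  rw [Subgroup.mem_center_iff]
  intro g
  obtain ⟨⟨m, hm⟩, hmn⟩ := hsurj ⟨n, hn⟩
  have hfix : ∀ gc : ConjAct G, gc • (⟨n, hn⟩ : N) = ⟨n, hn⟩ := by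
    intro gc; rw [← hmn]; exact hm gc
  have := congrArg Subtype.val (hfix (ConjAct.toConjAct g))
  rw [ConjAct.Subgroup.val_conj_smul] at this
  simp only [ConjAct.toConjAct_smul] at this
  calc g * n = (g * n * g⁻¹) * g := by group
    _ = n * g := by rw [this]

theorem center_inf_commutator_not_maximal
    {p : ℕ} (hp : p.Prime)
    {G : Type*} [Group G] [Finite G] [Group.IsNilpotent G]
    (hG : IsPGroup p G)
    (hcl : 4 ≤ Group.nilpotencyClass G) :
    ¬ IsCoatom ((Subgroup.center G ⊓ commutator G).subgroupOf (commutator G)) := by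
  intro hmax
  haveI : Fact p.Prime := ⟨hp⟩
  set K : Subgroup ↥(commutator G) :=
    (Subgroup.center G ⊓ commutator G).subgroupOf (commutator G) with hKdef
  have hΓp : IsPGroup p ↥(commutator G) := hG.to_subgroup (commutator G)
  haveI hKn : K.Normal :=
    Subgroup.NormalizerCondition.normal_of_coatom K normalizerCondition_of_isNilpotent hmax
  -- every subgroup of the quotient by K is ⊥ or ⊤
  have hsub : ∀ H : Subgroup (↥(commutator G) ⧸ K), H = ⊥ ∨ H = ⊤ := by
    intro H
    have hle : K ≤ Subgroup.comap (QuotientGroup.mk' K) H := by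
      intro x hx
      have hx1 : QuotientGroup.mk' K x = 1 := (QuotientGroup.eq_one_iff x).mpr hx
      simp only [Subgroup.mem_comap, hx1]
      exact H.one_mem
    rcases eq_or_lt_of_le hle with heq | hlt
    · left
      rw [← Subgroup.map_comap_eq_self_of_surjective (QuotientGroup.mk'_surjective K) H,
        ← heq, Subgroup.map_eq_bot_iff, QuotientGroup.ker_mk']
    · right
      have htop := hmax.2 _ hlt
      rw [← Subgroup.map_comap_eq_self_of_surjective (QuotientGroup.mk'_surjective K) H, htop]
      exact Subgroup.map_top_of_surjective _ (QuotientGroup.mk'_surjective K)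
  -- the quotient by K is nontrivial
  haveI hnt : Nontrivial (↥(commutator G) ⧸ K) := by
    obtain ⟨x, -, hx⟩ := SetLike.exists_of_lt (lt_top_iff_ne_top.mpr hmax.1 : K < ⊤)
    exact ⟨QuotientGroup.mk x, 1, fun h => hx ((QuotientGroup.eq_one_iff x).mp h)⟩
  -- the quotient by K has order p
  have hQ'p : IsPGroup p (↥(commutator G) ⧸ K) := hΓp.to_quotient K
  obtain ⟨n, hn⟩ := IsPGroup.iff_card.mp hQ'p
  have hn0 : n ≠ 0 := by
    rintro rfl
    rw [pow_zero] at hn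
    exact (Finite.one_lt_card (α := ↥(commutator G) ⧸ K)).ne' hn
  have hdvd : p ∣ Nat.card (↥(commutator G) ⧸ K) := hn ▸ dvd_pow_self p hn0
  obtain ⟨g, hg⟩ := exists_prime_orderOf_dvd_card' p hdvd
  have hzt : Subgroup.zpowers g = ⊤ := by
    rcases hsub (Subgroup.zpowers g) with h | h
    · exfalso
      rw [Subgroup.zpowers_eq_bot] at h
      rw [h, orderOf_one] at hg
      exact hp.ne_one hg.symm
    · exact h
  have hcardQ' : Nat.card (↥(commutator G) ⧸ K) = p := by
    rw [← hg, ← Nat.card_zpowers g, hzt, Subgroup.card_top]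
  -- identify the quotient with the commutator subgroup of G ⧸ center G
  have hφ : Function.Surjective (QuotientGroup.mk' (Subgroup.center G)) :=
    QuotientGroup.mk'_surjective _
  have hmap : Subgroup.map (QuotientGroup.mk' (Subgroup.center G)) (commutator G)
      = commutator (G ⧸ Subgroup.center G) := by
    rw [commutator_def, commutator_def, Subgroup.map_commutator,
      Subgroup.map_top_of_surjective _ hφ]
  have hker : ((QuotientGroup.mk' (Subgroup.center G)).subgroupMap (commutator G)).ker = K := by
    ext x
    simp only [MonoidHom.mem_ker]
    constructor
    · intro h
      have h1 : QuotientGroup.mk' (Subgroup.center G) (x : G) = 1 := congrArg Subtype.val h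
      exact Subgroup.mem_subgroupOf.mpr
        (Subgroup.mem_inf.mpr ⟨(QuotientGroup.eq_one_iff _).mp h1, x.2⟩)
    · intro h
      have h1 : (x : G) ∈ Subgroup.center G := (Subgroup.mem_inf.mp (Subgroup.mem_subgroupOf.mp h)).1
      exact Subtype.ext ((QuotientGroup.eq_one_iff _).mpr h1)
  have e : (↥(commutator G) ⧸ K) ≃* ↥(commutator (G ⧸ Subgroup.center G)) :=
    ((QuotientGroup.quotientMulEquivOfEq hker.symm).trans
      (QuotientGroup.quotientKerEquivOfSurjective _
        ((QuotientGroup.mk' (Subgroup.center G)).subgroupMap_surjective (commutator G)))).trans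
      (MulEquiv.subgroupCongr hmap)
  have hcardN : Nat.card ↥(commutator (G ⧸ Subgroup.center G)) = p :=
    (Nat.card_congr e.toEquiv).symm.trans hcardQ'
  -- the commutator of the quotient is central
  have hQp : IsPGroup p (G ⧸ Subgroup.center G) := hG.to_quotient _
  have hle : commutator (G ⧸ Subgroup.center G) ≤ Subgroup.center (G ⧸ Subgroup.center G) :=
    le_center_of_card_eq_prime hp hQp _ hcardN
  -- the quotient of Q by its commutator has class ≤ 1
  have habel : Group.nilpotencyClass
      ((G ⧸ Subgroup.center G) ⧸ commutator (G ⧸ Subgroup.center G)) ≤ 1 := by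
    rw [← upperCentralSeries_eq_top_iff_nilpotencyClass_le, upperCentralSeries_one, eq_top_iff]
    intro x _
    induction x using QuotientGroup.induction_on with
    | H a =>
      rw [Subgroup.mem_center_iff]
      intro y
      induction y using QuotientGroup.induction_on with
      | H b =>
        show QuotientGroup.mk (b * a) = QuotientGroup.mk (a * b)
        rw [QuotientGroup.eq]
        open scoped commutatorElement in
        have hcomm : (b * a)⁻¹ * (a * b) = ⁅a⁻¹, b⁻¹⁆ := by group
        rw [hcomm, commutator_def]
        exact Subgroup.commutator_mem_commutator (Subgroup.mem_top _) (Subgroup.mem_top _)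
  have hcls : Group.nilpotencyClass (G ⧸ Subgroup.center G) ≤
      Group.nilpotencyClass
        ((G ⧸ Subgroup.center G) ⧸ commutator (G ⧸ Subgroup.center G)) + 1 :=
    nilpotencyClass_le_of_ker_le_center (QuotientGroup.mk' _)
      (by rw [QuotientGroup.ker_mk']; exact hle)
  have h2 : Group.nilpotencyClass (G ⧸ Subgroup.center G) ≤ 2 := by omega
  rw [nilpotencyClass_quotient_center] at h2
  omega
end

section
/- Let G be a finite group and H a subgroup with H ≤ γ₂(G) ∩ Z(G) (so H is normal in G). Suppose there exist elements x₁, ..., xₙ ∈ G such that every element of γ₂(G/H) lies in the union over i = 1, ..., n of the sets [xᵢH, G/H] = { [xᵢH, gH] : g ∈ G }, and such that H ⊆ [xᵢ, G] for every i = 1, ..., n, where [x, G] denotes the set { [x, g] : g ∈ G }. Then every element of γ₂(G) lies in the union over i = 1, ..., n of the sets [xᵢ, G]. -/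
open scoped commutatorElement

theorem commutator_eq_union_of_quotient
    {G : Type*} [Group G] [Finite G] (H : Subgroup G) [H.Normal]
    (hle : H ≤ commutator G ⊓ Subgroup.center G)
    (n : ℕ) (x : Fin n → G)
    (hcover : ∀ g ∈ commutator (G ⧸ H),
      ∃ i : Fin n, ∃ y : G ⧸ H, g = ⁅(QuotientGroup.mk (x i) : G ⧸ H), y⁆)
    (hint : ∀ i : Fin n, (H : Set G) ⊆ {g | ∃ y : G, g = ⁅x i, y⁆}) :
    ∀ g ∈ commutator G, ∃ i : Fin n, ∃ y : G, g = ⁅x i, y⁆ := by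
  intro g hg
  have hgq : (QuotientGroup.mk g : G ⧸ H) ∈ commutator (G ⧸ H) := by
    have h1 : (commutator G).map (QuotientGroup.mk' H) ≤ commutator (G ⧸ H) := by
      rw [commutator_def, Subgroup.map_commutator, commutator_def]
      exact Subgroup.commutator_mono le_top le_top
    exact h1 ⟨g, hg, rfl⟩
  obtain ⟨i, y, hy⟩ := hcover _ hgq
  obtain ⟨y', rfl⟩ := QuotientGroup.mk_surjective y
  have hH : ⁅x i, y'⁆⁻¹ * g ∈ H := by
    rw [← QuotientGroup.eq]
    exact (map_commutatorElement (QuotientGroup.mk' H) (x i) y').trans hy.symm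
  obtain ⟨z, hz⟩ := hint i hH
  have hc : ⁅x i, z⁆ ∈ Subgroup.center G := hz ▸ (hle hH).2
  refine ⟨i, y' * z, ?_⟩
  have key : ⁅x i, y' * z⁆ = ⁅x i, y'⁆ * (y' * (⁅x i, z⁆ * y'⁻¹)) := by
    simp only [commutatorElement_def, mul_inv_rev, mul_assoc,
      mul_inv_cancel_left, inv_mul_cancel_left]
  rw [key, hc.comm y'⁻¹, mul_inv_cancel_left, ← hz, mul_inv_cancel_left]
end
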